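/- Let λ ⊆ μ ⊆ ξ be partitions such that μ/λ and ξ/μ are both nonempty ribbons. Then exactly one of the following two cases occurs: (1) there exists a partition ν with λ ⊆ ν ⊆ ξ such that ν/λ and ξ/ν are ribbons with |ν/λ| = |ξ/μ| and |ξ/ν| = |μ/λ|, and ε(ν/λ)·ε(ξ/ν) = ε(μ/λ)·ε(ξ/μ); (2) there exists a partition μ̂ ≠ μ with λ ⊆ μ̂ ⊆ ξ such that μ̂/λ and ξ/μ̂ are ribbons with |μ̂/λ| = |μ/λ| and |ξ/μ̂| = |ξ/μ|, and ε(μ̂/λ)·ε(ξ/μ̂) = −ε(μ/λ)·ε(ξ/μ). -/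

import Mathlib

/-- Two cells of `ℕ × ℕ` are adjacent when they share a side. -/
def CellAdj (a b : ℕ × ℕ) : Prop :=
  (a.1 = b.1 ∧ (a.2 + 1 = b.2 ∨ b.2 + 1 = a.2)) ∨
  (a.2 = b.2 ∧ (a.1 + 1 = b.1 ∨ b.1 + 1 = a.1))

/-- A finite set of cells is connected if any two of its cells are joined by a
path of cells of the set, consecutive ones sharing a side. -/
def ConnectedCells (S : Finset (ℕ × ℕ)) : Prop :=
  ∀ a ∈ S, ∀ b ∈ S,
    Relation.ReflTransGen (fun x y => x ∈ S ∧ y ∈ S ∧ CellAdj x y) a b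

/-- `S` contains no 2 × 2 square of cells. -/
def NoTwoByTwo (S : Finset (ℕ × ℕ)) : Prop :=
  ¬ ∃ i j : ℕ, (i, j) ∈ S ∧ (i + 1, j) ∈ S ∧ (i, j + 1) ∈ S ∧ (i + 1, j + 1) ∈ S

/-- The cells of the skew shape `μ / ν` (`ν` first argument, `μ` second). -/
def skewCells (ν μ : YoungDiagram) : Finset (ℕ × ℕ) :=
  μ.cells \ ν.cells

/-- `μ / ν` is a ribbon: a nonempty connected skew shape with no 2 × 2 square. -/
def IsRibbon (ν μ : YoungDiagram) : Prop :=
  ν ≤ μ ∧ (skewCells ν μ).Nonempty ∧ ConnectedCells (skewCells ν μ) ∧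
    NoTwoByTwo (skewCells ν μ)

/-- The height of the skew shape `μ / ν`: the number of rows it occupies, minus one. -/
def skewHeight (ν μ : YoungDiagram) : ℕ :=
  ((skewCells ν μ).image Prod.fst).card - 1

/-- The sign of the skew shape `μ / ν`, i.e. `(-1) ^ height`. -/
def skewSign (ν μ : YoungDiagram) : ℤ :=
  (-1) ^ skewHeight ν μ

/-!
Encode a partition `λ` by its set of beads `{λᵢ - i}` (its abacus, or beta-set). Adding a ribbon
of size `k` to `λ` amounts to moving one bead from a position `p` to the empty position `p + k`,
and the height of the ribbon is the number of beads strictly between `p` and `p + k`. So `μ/λ`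
and `ξ/μ` are two successive bead moves `p → q` and `r → s`.

If they move different beads (`r ≠ q` and `s ≠ p`), they can be made in the other order, which
gives `ν`. The two orders have total heights of the same parity: making one move first changes
the height of the other only by whether its endpoints lie between the other's endpoints, and
these four incidences add up to an even number. Any two-step path from `λ` to `ξ` with the sizes of
`(μ/λ, ξ/μ)` makes the same two moves, so it has the sign of `μ` and the second case fails.

Otherwise the net effect is a single move `a → b`. A two-step path with sizes `(k₁, k₂)` either
passes through the empty position `a + k₁` (sign `(-1)^n`, where `n` counts the beads between `a`
and `b`), or moves the bead at `a + k₂` to `b` first and then `a` into its place (sign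
`-(-1)^n`). If `μ` is of the first kind, whether `a + k₂` is occupied decides which case occurs;
if it is of the second kind, whether `a + k₁` is occupied does.
-/

section BeadMoves

def moveBead (B : Set ℤ) (p q : ℤ) : Set ℤ := insert q (B \ {p})

structure IsBeadMove (B : Set ℤ) (p q : ℤ) : Prop where
  lt : p < q
  mem : p ∈ B
  notMem : q ∉ B

noncomputable def beadsBetween (B : Set ℤ) (p q : ℤ) : ℕ := (B ∩ Set.Ioo p q).ncard

variable {B : Set ℤ} {a b c p q r s x y : ℤ}

@[simp]
lemma mem_moveBead : x ∈ moveBead B p q ↔ x = q ∨ x ∈ B ∧ x ≠ p := by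
  simp [moveBead]

lemma moveBead_moveBead_of_notMem (hc : c ∉ B) :
    moveBead (moveBead B a c) c b = moveBead B a b := by
  ext x
  simp only [mem_moveBead]
  grind

lemma moveBead_moveBead_of_mem (ha : a ∈ B) (hb : b ∉ B) (hc : c ∈ B) (hac : a ≠ c) :
    moveBead (moveBead B c b) a c = moveBead B a b := by
  ext x
  simp only [mem_moveBead]
  grind

lemma moveBead_comm (hp : p ∈ B) (hq : q ∉ B) (hr : r ∈ B) (hs : s ∉ B) :
    moveBead (moveBead B p q) r s = moveBead (moveBead B r s) p q := by
  ext x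
  simp only [mem_moveBead]
  grind

lemma IsBeadMove.eq_of_moveBead_eq {p' q' : ℤ} (h : IsBeadMove B p q)
    (heq : moveBead B p q = moveBead B p' q') : p = p' ∧ q = q' := by
  have hp : p ∉ moveBead B p' q' := heq ▸ by simp [h.lt.ne]
  have hq : q ∈ moveBead B p' q' := heq ▸ by simp
  simp only [mem_moveBead, not_or, not_and_or, not_not] at hp hq
  exact ⟨hp.2.resolve_left (not_not.2 h.mem), hq.resolve_right fun h' => h.notMem h'.1⟩

lemma finite_inter_Ioo : (B ∩ Set.Ioo x y).Finite := (Set.finite_Ioo x y).inter_of_right B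

lemma beadsBetween_insert (hq : q ∉ B) :
    beadsBetween (insert q B) x y = beadsBetween B x y + if q ∈ Set.Ioo x y then 1 else 0 := by
  unfold beadsBetween
  split_ifs with hqI
  · rw [Set.insert_inter_of_mem hqI,
      Set.ncard_insert_of_notMem (fun h => hq h.1) finite_inter_Ioo]
  · rw [Set.insert_inter_of_notMem hqI, add_zero]

lemma beadsBetween_sdiff_singleton_add (hp : p ∈ B) :
    beadsBetween (B \ {p}) x y + (if p ∈ Set.Ioo x y then 1 else 0) = beadsBetween B x y := by
  unfold beadsBetween
  rw [← Set.inter_sdiff_right_comm]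
  split_ifs with hpI
  · exact Set.ncard_sdiff_singleton_add_one ⟨hp, hpI⟩ finite_inter_Ioo
  · rw [Set.sdiff_singleton_eq_self fun h => hpI h.2, add_zero]

lemma beadsBetween_eq_add_add (hxc : x < c) (hcy : c < y) :
    beadsBetween B x y = beadsBetween B x c + (B ∩ {c}).ncard + beadsBetween B c y := by
  unfold beadsBetween
  rw [← Set.Ioo_union_Ico_eq_Ioo hxc hcy.le, ← Set.Ioo_insert_left hcy, Set.insert_eq,
    Set.inter_union_distrib_left, Set.inter_union_distrib_left, add_assoc,
    Set.ncard_union_eq, Set.ncard_union_eq]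
  all_goals
    refine Set.disjoint_left.2 fun z hz hz' => ?_
    simp only [Set.mem_inter_iff, Set.mem_union, Set.mem_Ioo, Set.mem_singleton_iff] at hz hz'
    omega

lemma beadsBetween_eq_add_of_notMem (hxc : x < c) (hcy : c < y) (hc : c ∉ B) :
    beadsBetween B x y = beadsBetween B x c + beadsBetween B c y := by
  rw [beadsBetween_eq_add_add hxc hcy, Set.inter_singleton_eq_empty.2 hc, Set.ncard_empty,
    add_zero]

lemma beadsBetween_eq_add_of_mem (hxc : x < c) (hcy : c < y) (hc : c ∈ B) :
    beadsBetween B x y = beadsBetween B x c + beadsBetween B c y + 1 := by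
  rw [beadsBetween_eq_add_add hxc hcy, Set.inter_eq_right.2 (Set.singleton_subset_iff.2 hc),
    Set.ncard_singleton, add_right_comm]

lemma IsBeadMove.beadsBetween_moveBead (h : IsBeadMove B p q) :
    beadsBetween (moveBead B p q) x y + (if p ∈ Set.Ioo x y then 1 else 0) =
      beadsBetween B x y + if q ∈ Set.Ioo x y then 1 else 0 := by
  rw [moveBead, beadsBetween_insert fun h' => h.notMem h'.1,
    ← beadsBetween_sdiff_singleton_add h.mem, add_right_comm]

lemma neg_one_pow_ne_neg (n : ℕ) : (-1 : ℤ) ^ n ≠ -(-1) ^ n := fun h =>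
  pow_ne_zero n (by norm_num) (CharZero.eq_neg_self_iff.1 h)

lemma IsBeadMove.decompose_of_notMem (h : IsBeadMove B a b) (hac : a < c) (hcb : c < b)
    (hc : c ∉ B) :
    IsBeadMove B a c ∧ IsBeadMove (moveBead B a c) c b ∧
      moveBead (moveBead B a c) c b = moveBead B a b ∧
      beadsBetween B a c + beadsBetween (moveBead B a c) c b = beadsBetween B a b := by
  have h₁ : IsBeadMove B a c := ⟨hac, h.mem, hc⟩
  refine ⟨h₁, ⟨hcb, by simp, by simp [hcb.ne', h.notMem]⟩,
    moveBead_moveBead_of_notMem hc, ?_⟩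
  have := h₁.beadsBetween_moveBead (x := c) (y := b)
  rw [beadsBetween_eq_add_of_notMem hac hcb hc]
  simp only [Set.mem_Ioo] at this
  split_ifs at this <;> omega

lemma IsBeadMove.decompose_of_mem (h : IsBeadMove B a b) (hac : a < c) (hcb : c < b)
    (hc : c ∈ B) :
    IsBeadMove B c b ∧ IsBeadMove (moveBead B c b) a c ∧
      moveBead (moveBead B c b) a c = moveBead B a b ∧
      beadsBetween B c b + beadsBetween (moveBead B c b) a c + 1 = beadsBetween B a b := by
  have h₁ : IsBeadMove B c b := ⟨hcb, hc, h.notMem⟩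
  refine ⟨h₁, ⟨hac, by simp [h.mem, hac.ne, (hac.trans hcb).ne], by simp [hcb.ne]⟩,
    moveBead_moveBead_of_mem h.mem h.notMem hc hac.ne, ?_⟩
  have := h₁.beadsBetween_moveBead (x := a) (y := c)
  rw [beadsBetween_eq_add_of_mem hac hcb hc]
  simp only [Set.mem_Ioo] at this
  split_ifs at this <;> omega

lemma IsBeadMove.trans (h₁ : IsBeadMove B p q) (h₂ : IsBeadMove (moveBead B p q) q s) :
    IsBeadMove B p s ∧ moveBead (moveBead B p q) q s = moveBead B p s := by
  have hs := h₂.notMem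
  simp only [mem_moveBead, not_or, not_and, not_not] at hs
  exact ⟨⟨h₁.lt.trans h₂.lt, h₁.mem, fun h => (h₁.lt.trans h₂.lt).ne' (hs.2 h)⟩,
    moveBead_moveBead_of_notMem h₁.notMem⟩

lemma IsBeadMove.refill (h₁ : IsBeadMove B p q) (h₂ : IsBeadMove (moveBead B p q) r p) :
    IsBeadMove B r q ∧ moveBead (moveBead B p q) r p = moveBead B r q := by
  have hr := h₂.mem
  simp only [mem_moveBead, (h₂.lt.trans h₁.lt).ne, false_or] at hr
  exact ⟨⟨h₂.lt.trans h₁.lt, hr.1, h₁.notMem⟩,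
    moveBead_moveBead_of_mem hr.1 h₁.notMem h₁.mem hr.2⟩

lemma IsBeadMove.eq_trans_or_eq_refill (h₁ : IsBeadMove B p q)
    (h₂ : IsBeadMove (moveBead B p q) r s)
    (hX : moveBead (moveBead B p q) r s = moveBead B a b) :
    (p = a ∧ r = q ∧ s = b) ∨ (r = a ∧ s = p ∧ q = b) := by
  by_cases hrq : r = q
  · subst hrq
    obtain ⟨h, hX'⟩ := h₁.trans h₂
    obtain ⟨rfl, rfl⟩ := h.eq_of_moveBead_eq (hX'.symm.trans hX)
    exact Or.inl ⟨rfl, rfl, rfl⟩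
  by_cases hsp : s = p
  · subst hsp
    obtain ⟨h, hX'⟩ := h₁.refill h₂
    obtain ⟨rfl, rfl⟩ := h.eq_of_moveBead_eq (hX'.symm.trans hX)
    exact Or.inr ⟨rfl, rfl, rfl⟩
  -- otherwise both `p` and `r` leave `B`, while `moveBead B a b` lacks only `a`
  exfalso
  have hr := h₂.mem
  simp only [mem_moveBead, hrq, false_or] at hr
  have eq_a : ∀ x ∈ B, x ∉ moveBead (moveBead B p q) r s → x = a := by
    intro x hx hxX
    rw [hX] at hxX
    simp only [mem_moveBead, not_or, not_and, not_not] at hxX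
    exact hxX.2 hx
  have hpa := eq_a p h₁.mem (by simp [Ne.symm hsp, h₁.lt.ne])
  have hra := eq_a r hr.1 (by simp [h₂.lt.ne])
  exact hr.2 (hra.trans hpa.symm)

lemma IsBeadMove.sdiff_moveBead_moveBead (h₁ : IsBeadMove B p q)
    (h₂ : IsBeadMove (moveBead B p q) r s) (hrq : r ≠ q) (hsp : s ≠ p) :
    B \ moveBead (moveBead B p q) r s = {p, r} ∧
      moveBead (moveBead B p q) r s \ B = {q, s} := by
  have hr := h₂.mem
  have hs := h₂.notMem
  simp only [mem_moveBead, hrq, false_or, not_or, not_and, not_not] at hr hs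
  have := h₁.mem; have := h₁.notMem; have := h₁.lt; have := h₂.lt
  constructor <;> ext x <;> simp only [Set.mem_sdiff, mem_moveBead, Set.mem_insert_iff,
    Set.mem_singleton_iff] <;> grind

lemma IsBeadMove.comm (h₁ : IsBeadMove B p q) (h₂ : IsBeadMove (moveBead B p q) r s)
    (hrq : r ≠ q) (hsp : s ≠ p) :
    IsBeadMove B r s ∧ IsBeadMove (moveBead B r s) p q ∧
      moveBead (moveBead B r s) p q = moveBead (moveBead B p q) r s ∧
      (-1 : ℤ) ^ (beadsBetween B r s + beadsBetween (moveBead B r s) p q) =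
        (-1) ^ (beadsBetween B p q + beadsBetween (moveBead B p q) r s) := by
  have hr := h₂.mem
  have hs := h₂.notMem
  simp only [mem_moveBead, hrq, false_or, not_or, not_and, not_not] at hr hs
  have hs' : s ∉ B := fun h => hsp (hs.2 h)
  have h₃ : IsBeadMove B r s := ⟨h₂.lt, hr.1, hs'⟩
  have h₄ : IsBeadMove (moveBead B r s) p q :=
    ⟨h₁.lt, by simp [h₁.mem, Ne.symm hr.2], by simp [Ne.symm hs.1, h₁.notMem]⟩
  refine ⟨h₃, h₄, (moveBead_comm h₁.mem h₁.notMem hr.1 hs').symm, ?_⟩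
  have e₁ := h₁.beadsBetween_moveBead (x := r) (y := s)
  have e₂ := h₃.beadsBetween_moveBead (x := p) (y := q)
  have := h₁.lt; have := h₂.lt
  -- as `p, q, r, s` are distinct,
  -- `[r ∈ (p, q)] + [s ∈ (p, q)] + [p ∈ (r, s)] + [q ∈ (r, s)]` is even
  apply neg_one_pow_congr
  rw [Nat.even_iff, Nat.even_iff]
  simp only [Set.mem_Ioo] at e₁ e₂
  split_ifs at e₁ e₂ <;> omega

def HasTwoMovePath (B X : Set ℤ) (k₁ k₂ ε : ℤ) : Prop :=
  ∃ p q r s, IsBeadMove B p q ∧ IsBeadMove (moveBead B p q) r s ∧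
    X = moveBead (moveBead B p q) r s ∧ q - p = k₁ ∧ s - r = k₂ ∧
    ε = (-1) ^ (beadsBetween B p q + beadsBetween (moveBead B p q) r s)

variable {k₁ k₂ ε : ℤ}

lemma IsBeadMove.hasTwoMovePath_iff (h : IsBeadMove B a b) :
    HasTwoMovePath B (moveBead B a b) k₁ k₂ ε ↔ 0 < k₁ ∧ 0 < k₂ ∧ k₁ + k₂ = b - a ∧
      (a + k₁ ∉ B ∧ ε = (-1) ^ beadsBetween B a b ∨
        a + k₂ ∈ B ∧ ε = -(-1) ^ beadsBetween B a b) := by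
  constructor
  · rintro ⟨p, q, r, s, h₁, h₂, hX, rfl, rfl, rfl⟩
    have := h₁.lt; have := h₂.lt
    rcases h₁.eq_trans_or_eq_refill h₂ hX.symm with ⟨rfl, rfl, rfl⟩ | ⟨rfl, rfl, rfl⟩
    · obtain ⟨-, -, -, hn⟩ := h.decompose_of_notMem h₁.lt h₂.lt h₁.notMem
      exact ⟨by omega, by omega, by omega, Or.inl ⟨by simpa using h₁.notMem, by rw [hn]⟩⟩
    · obtain ⟨-, -, -, hn⟩ := h.decompose_of_mem h₂.lt h₁.lt h₁.mem
      refine ⟨by omega, by omega, by omega, Or.inr ⟨by simpa using h₁.mem, ?_⟩⟩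
      rw [← hn, pow_succ, mul_neg_one, neg_neg]
  · rintro ⟨hk₁, hk₂, hk, ⟨hc, rfl⟩ | ⟨hc, rfl⟩⟩
    · obtain ⟨h₁, h₂, hX, hn⟩ := h.decompose_of_notMem (c := a + k₁) (by omega) (by omega) hc
      exact ⟨a, a + k₁, a + k₁, b, h₁, h₂, hX.symm, by ring, by omega, by rw [hn]⟩
    · obtain ⟨h₁, h₂, hX, hn⟩ := h.decompose_of_mem (c := a + k₂) (by omega) (by omega) hc
      refine ⟨a + k₂, b, a, a + k₂, h₁, h₂, hX.symm, by omega, by ring, ?_⟩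
      rw [← hn, pow_succ, mul_neg_one, neg_neg]

lemma IsBeadMove.xor_hasTwoMovePath (h : IsBeadMove B a b)
    (hpath : HasTwoMovePath B (moveBead B a b) k₁ k₂ ε) :
    Xor (HasTwoMovePath B (moveBead B a b) k₂ k₁ ε)
      (HasTwoMovePath B (moveBead B a b) k₁ k₂ (-ε)) := by
  simp only [h.hasTwoMovePath_iff] at hpath ⊢
  obtain ⟨hk₁, hk₂, hk, hε⟩ := hpath
  have hσ := neg_one_pow_ne_neg (beadsBetween B a b)
  rcases hε with ⟨hc, rfl⟩ | ⟨hc, rfl⟩ <;>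
    simp [xor_def, hc, hk₁, hk₂, hk, add_comm k₂, hσ, hσ.symm, em, em']

lemma IsBeadMove.sign_eq_of_hasTwoMovePath (h₁ : IsBeadMove B p q)
    (h₂ : IsBeadMove (moveBead B p q) r s) (hrq : r ≠ q) (hsp : s ≠ p)
    (h : HasTwoMovePath B (moveBead (moveBead B p q) r s) (q - p) (s - r) ε) :
    ε = (-1) ^ (beadsBetween B p q + beadsBetween (moveBead B p q) r s) := by
  obtain ⟨p', q', r', s', h₁', h₂', hX, hk₁, hk₂, rfl⟩ := h
  have hrq' : r' ≠ q' := by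
    rintro rfl
    rcases h₁.eq_trans_or_eq_refill h₂ (hX.trans (h₁'.trans h₂').2) with h | h <;> tauto
  have hsp' : s' ≠ p' := by
    rintro rfl
    rcases h₁.eq_trans_or_eq_refill h₂ (hX.trans (h₁'.refill h₂').2) with h | h <;> tauto
  obtain ⟨hd₁, hd₂⟩ := h₁.sdiff_moveBead_moveBead h₂ hrq hsp
  obtain ⟨hd₁', hd₂'⟩ := h₁'.sdiff_moveBead_moveBead h₂' hrq' hsp'
  rw [← hX] at hd₁' hd₂'
  have hrp : r ≠ p := by
    rintro rfl
    simpa [h₁.lt.ne] using h₂.mem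
  have := h₁.lt; have := h₂.lt
  rcases Set.pair_eq_pair_iff.1 (hd₁'.symm.trans hd₁) with ⟨rfl, rfl⟩ | ⟨rfl, rfl⟩
  · obtain rfl : q' = q := by omega
    obtain rfl : s' = s := by omega
    rfl
  · rcases Set.pair_eq_pair_iff.1 (hd₂'.symm.trans hd₂) with ⟨rfl, rfl⟩ | ⟨rfl, rfl⟩
    · omega
    · exact (h₁.comm h₂ hrq hsp).2.2.2

theorem HasTwoMovePath.xor {X : Set ℤ} (h : HasTwoMovePath B X k₁ k₂ ε) :
    Xor (HasTwoMovePath B X k₂ k₁ ε) (HasTwoMovePath B X k₁ k₂ (-ε)) := by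
  obtain ⟨p, q, r, s, h₁, h₂, hX, hk₁, hk₂, hε⟩ := id h
  by_cases hrq : r = q
  · subst hrq
    rw [hX, (h₁.trans h₂).2] at h ⊢
    exact (h₁.trans h₂).1.xor_hasTwoMovePath h
  by_cases hsp : s = p
  · subst hsp
    rw [hX, (h₁.refill h₂).2] at h ⊢
    exact (h₁.refill h₂).1.xor_hasTwoMovePath h
  obtain ⟨h₃, h₄, hX', hε'⟩ := h₁.comm h₂ hrq hsp
  subst hX hk₁ hk₂ hε
  refine Or.inl ⟨⟨r, s, p, q, h₃, h₄, hX'.symm, rfl, rfl, hε'.symm⟩, fun h' => ?_⟩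
  exact neg_one_pow_ne_neg _ (h₁.sign_eq_of_hasTwoMovePath h₂ hrq hsp h').symm

end BeadMoves

open YoungDiagram

lemma YoungDiagram.rowLen_le_rowLen {l m : YoungDiagram} (h : l ≤ m) (i : ℕ) :
    l.rowLen i ≤ m.rowLen i := by
  by_contra! hlt
  exact (mem_iff_lt_rowLen.1 (h (mem_iff_lt_rowLen.2 hlt))).false

lemma YoungDiagram.le_of_rowLen_le {l m : YoungDiagram} (h : ∀ i, l.rowLen i ≤ m.rowLen i) :
    l ≤ m := fun ⟨i, _⟩ hc =>
  mem_iff_lt_rowLen.2 ((mem_iff_lt_rowLen.1 hc).trans_le (h i))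

lemma YoungDiagram.rowLen_eq_zero {l : YoungDiagram} {i : ℕ} (hi : l.colLen 0 ≤ i) :
    l.rowLen i = 0 :=
  Nat.eq_zero_of_not_pos fun h => (mem_iff_lt_colLen.1 (mem_iff_lt_rowLen.2 h)).not_ge hi

def YoungDiagram.ofAntitone (f : ℕ → ℕ) (hf : Antitone f) (N : ℕ) : YoungDiagram :=
  ofRowLens (List.ofFn fun i : Fin N => f i)
    (hf.comp_monotone Fin.val_strictMono.monotone).sortedGE_ofFn

lemma YoungDiagram.rowLen_ofAntitone {f : ℕ → ℕ} {hf : Antitone f} {N : ℕ}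
    (hN : ∀ i, N ≤ i → f i = 0) (i : ℕ) : (ofAntitone f hf N).rowLen i = f i := by
  refine eq_of_forall_lt_iff fun j => ?_
  rw [← mem_iff_lt_rowLen, ofAntitone, mem_ofRowLens]
  simp only [List.length_ofFn, List.getElem_ofFn]
  exact ⟨fun ⟨_, h⟩ => h, fun h => ⟨by by_contra hi; rw [hN i (by omega)] at h; omega, h⟩⟩

lemma Finset.sum_Icc_sub_of_succ_eq {F G : ℕ → ℤ} {r s : ℕ} (hrs : r ≤ s)
    (h : ∀ i, r ≤ i → i < s → F (i + 1) = G i) :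
    ∑ i ∈ Finset.Icc r s, (F i - G i) = F r - G s := by
  induction s, hrs using Nat.le_induction with
  | base => simp
  | succ s hrs ih =>
    rw [Finset.sum_Icc_succ_top (by omega), ih fun i hri his => h i hri (by omega),
      h s hrs (by omega)]
    ring

abbrev CellsJoined (S : Finset (ℕ × ℕ)) : ℕ × ℕ → ℕ × ℕ → Prop :=
  Relation.ReflTransGen fun x y => x ∈ S ∧ y ∈ S ∧ CellAdj x y

lemma CellsJoined.symm {S : Finset (ℕ × ℕ)} {a b : ℕ × ℕ} (h : CellsJoined S a b) :
    CellsJoined S b a := by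
  induction h with
  | refl => rfl
  | tail _ hxy ih => exact .head ⟨hxy.2.1, hxy.1, by unfold CellAdj at *; omega⟩ ih

lemma ConnectedCells.exists_vertical_pair {S : Finset (ℕ × ℕ)} (hS : ConnectedCells S)
    {a b : ℕ × ℕ} (ha : a ∈ S) (hb : b ∈ S) {i : ℕ} (hai : a.1 ≤ i) (hib : i < b.1) :
    ∃ j, (i, j) ∈ S ∧ (i + 1, j) ∈ S := by
  by_contra! hno
  suffices ∀ c, CellsJoined S a c → c.1 ≤ i from (this b (hS a ha b hb)).not_gt hib
  intro c hc
  induction hc with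
  | refl => exact hai
  | @tail x y _ hxy ih =>
    obtain ⟨hx, hy, hadj⟩ := hxy
    by_contra hlt
    obtain ⟨x₁, x₂⟩ := x
    obtain ⟨y₁, y₂⟩ := y
    unfold CellAdj at hadj
    simp only at hadj ih hlt
    obtain ⟨rfl, rfl⟩ : x₁ = i ∧ y₁ = i + 1 := by omega
    obtain rfl : y₂ = x₂ := by omega
    exact hno _ hx hy

lemma mem_skewCells {l m : YoungDiagram} {i j : ℕ} :
    (i, j) ∈ skewCells l m ↔ l.rowLen i ≤ j ∧ j < m.rowLen i := by
  simp only [skewCells, Finset.mem_sdiff, mem_cells, mem_iff_lt_rowLen, not_lt, and_comm]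

lemma cellsJoined_rowEnd {l m : YoungDiagram} {i j : ℕ} (hij : (i, j) ∈ skewCells l m) :
    CellsJoined (skewCells l m) (i, j) (i, m.rowLen i - 1) := by
  obtain ⟨d, hd⟩ : ∃ d, m.rowLen i - 1 = j + d :=
    ⟨_, (Nat.add_sub_of_le (Nat.le_sub_one_of_lt (mem_skewCells.1 hij).2)).symm⟩
  induction d generalizing j with
  | zero => rw [hd, add_zero]
  | succ d ih =>
    have hij' : (i, j + 1) ∈ skewCells l m := by
      rw [mem_skewCells] at hij ⊢
      omega
    exact .head ⟨hij, hij', Or.inl ⟨rfl, Or.inl rfl⟩⟩ (ih hij' (by omega))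

def beta (l : YoungDiagram) (i : ℕ) : ℤ := l.rowLen i - i

def beads (l : YoungDiagram) : Set ℤ := Set.range (beta l)

lemma beta_strictAnti (l : YoungDiagram) : StrictAnti (beta l) :=
  strictAnti_nat_of_succ_lt fun i => by
    have := l.rowLen_anti i (i + 1) (by omega)
    simp only [beta]
    push_cast
    omega

lemma beads_injective : Function.Injective beads := fun l m h => by
  have hβ : beta l = beta m :=
    Set.range_injOn_strictMono (γ := ℤᵒᵈ) (beta_strictAnti l) (beta_strictAnti m) h
  ext ⟨i, j⟩
  have := congrFun hβ i
  simp only [beta, sub_left_inj, Nat.cast_inj] at this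
  simp only [mem_cells, mem_iff_lt_rowLen, this]

/-- `m / l` is a ribbon occupying rows `r` to `s`: below its top row, each row of the ribbon ends
in the column where the row above it starts. -/
structure IsRowRibbon (l m : YoungDiagram) (r s : ℕ) : Prop where
  le : r ≤ s
  eq_of_lt : ∀ i < r, m.rowLen i = l.rowLen i
  eq_of_gt : ∀ i, s < i → m.rowLen i = l.rowLen i
  lt_top : l.rowLen r < m.rowLen r
  succ_eq : ∀ i, r ≤ i → i < s → m.rowLen (i + 1) = l.rowLen i + 1

namespace IsRowRibbon

variable {l m : YoungDiagram} {r s : ℕ} (h : IsRowRibbon l m r s)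
include h

lemma rowLen_lt {i : ℕ} (hri : r ≤ i) (his : i ≤ s) : l.rowLen i < m.rowLen i := by
  obtain rfl | hri := hri.eq_or_lt
  · exact h.lt_top
  obtain ⟨k, rfl⟩ : ∃ k, i = k + 1 := ⟨i - 1, by omega⟩
  have := h.succ_eq k (by omega) (by omega)
  have := l.rowLen_anti k (k + 1) (by omega)
  omega

lemma rowLen_le (i : ℕ) : l.rowLen i ≤ m.rowLen i := by
  rcases lt_or_ge i r with hi | hri
  · exact (h.eq_of_lt i hi).ge
  rcases lt_or_ge s i with hi | his
  · exact (h.eq_of_gt i hi).ge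
  · exact (h.rowLen_lt hri his).le

lemma mem_Icc_of_mem {i j : ℕ} (hij : (i, j) ∈ skewCells l m) : r ≤ i ∧ i ≤ s := by
  rw [mem_skewCells] at hij
  constructor
  · by_contra hi
    have := h.eq_of_lt i (by omega)
    omega
  · by_contra hi
    have := h.eq_of_gt i (by omega)
    omega

lemma cellsJoined_top {i j : ℕ} (hij : (i, j) ∈ skewCells l m) :
    CellsJoined (skewCells l m) (i, j) (r, m.rowLen r - 1) := by
  obtain ⟨hri, his⟩ := h.mem_Icc_of_mem hij
  induction i, hri using Nat.le_induction generalizing j with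
  | base => exact cellsJoined_rowEnd hij
  | succ k hrk ih =>
    have hend : (k + 1, m.rowLen (k + 1) - 1) ∈ skewCells l m := by
      have := h.rowLen_lt (i := k + 1) (by omega) his
      rw [mem_skewCells]
      omega
    have hup : (k, l.rowLen k) ∈ skewCells l m :=
      mem_skewCells.2 ⟨le_rfl, h.rowLen_lt hrk (by omega)⟩
    have := h.succ_eq k hrk (by omega)
    exact (cellsJoined_rowEnd hij).trans
      (.head ⟨hend, hup, Or.inr ⟨by omega, Or.inr rfl⟩⟩ (ih hup (by omega)))

lemma isRibbon : IsRibbon l m := by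
  refine ⟨le_of_rowLen_le h.rowLen_le, ⟨_, mem_skewCells.2 ⟨le_rfl, h.lt_top⟩⟩,
    fun ⟨_, _⟩ ha ⟨_, _⟩ hb => (h.cellsJoined_top ha).trans (h.cellsJoined_top hb).symm, ?_⟩
  rintro ⟨i, j, hij, -, -, hij'⟩
  have := h.succ_eq i (h.mem_Icc_of_mem hij).1 (h.mem_Icc_of_mem hij').2
  rw [mem_skewCells] at hij hij'
  omega

lemma beta_eq_of_lt {i : ℕ} (hi : i < r) : beta m i = beta l i := by
  simp only [beta, h.eq_of_lt i hi]

lemma beta_eq_of_gt {i : ℕ} (hi : s < i) : beta m i = beta l i := by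
  simp only [beta, h.eq_of_gt i hi]

lemma beta_succ {i : ℕ} (hri : r ≤ i) (his : i < s) : beta m (i + 1) = beta l i := by
  simp only [beta, h.succ_eq i hri his]
  push_cast
  ring

lemma beta_lt_of_le {i : ℕ} (hri : r ≤ i) : beta l i < beta m r := by
  have := (beta_strictAnti l).antitone hri
  have := h.lt_top
  simp only [beta] at *
  omega

lemma isBeadMove : IsBeadMove (beads l) (beta l s) (beta m r) := by
  refine ⟨h.beta_lt_of_le h.le, ⟨s, rfl⟩, ?_⟩
  rintro ⟨i, hi⟩
  rcases lt_or_ge i r with hir | hri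
  · have := (beta_strictAnti m) hir
    rw [h.beta_eq_of_lt hir] at this
    omega
  · exact (h.beta_lt_of_le hri).ne hi

lemma beads_eq : beads m = moveBead (beads l) (beta l s) (beta m r) := by
  have hβ := (beta_strictAnti l).injective
  ext x
  simp only [beads, mem_moveBead, Set.mem_range]
  constructor
  · rintro ⟨i, rfl⟩
    rcases lt_trichotomy i r with hir | rfl | hri
    · rw [h.beta_eq_of_lt hir]
      exact Or.inr ⟨⟨i, rfl⟩, hβ.ne (by have := h.le; omega)⟩
    · exact Or.inl rfl
    rcases le_or_gt i s with his | hsi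
    · obtain ⟨k, rfl⟩ : ∃ k, i = k + 1 := ⟨i - 1, by omega⟩
      rw [h.beta_succ (by omega) (by omega)]
      exact Or.inr ⟨⟨k, rfl⟩, hβ.ne (by omega)⟩
    · rw [h.beta_eq_of_gt hsi]
      exact Or.inr ⟨⟨i, rfl⟩, hβ.ne (by omega)⟩
  · rintro (rfl | ⟨⟨i, rfl⟩, hi⟩)
    · exact ⟨r, rfl⟩
    rcases lt_or_ge i r with hir | hri
    · exact ⟨i, h.beta_eq_of_lt hir⟩
    rcases lt_or_gt_of_ne (fun his : i = s => hi (his ▸ rfl)) with his | hsi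
    · exact ⟨i + 1, h.beta_succ hri his⟩
    · exact ⟨i, h.beta_eq_of_gt hsi⟩

lemma card_skewCells : ((skewCells l m).card : ℤ) = beta m r - beta l s := by
  rw [Finset.card_eq_sum_card_fiberwise (t := Finset.Icc r s) (f := Prod.fst)
    fun ⟨_, _⟩ hc => Finset.mem_Icc.2 (h.mem_Icc_of_mem hc)]
  have row : ∀ i, ((skewCells l m).filter fun c => c.1 = i) =
      (Finset.Ico (l.rowLen i) (m.rowLen i)).image (Prod.mk i) := fun i => by
    ext ⟨i', j⟩
    simp only [Finset.mem_filter, Finset.mem_image, Finset.mem_Ico, mem_skewCells]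
    constructor
    · rintro ⟨hj, rfl⟩
      exact ⟨j, hj, rfl⟩
    · rintro ⟨j, hj, ⟨⟩⟩
      exact ⟨hj, rfl⟩
  simp only [row, Finset.card_image_of_injective _ (Prod.mk_right_injective _), Nat.card_Ico]
  push_cast [h.rowLen_le]
  rw [← Finset.sum_Icc_sub_of_succ_eq h.le fun i hri his => h.beta_succ hri his]
  simp only [beta, sub_sub_sub_cancel_right]

lemma skewHeight_eq : skewHeight l m = beadsBetween (beads l) (beta l s) (beta m r) := by
  have rows : (skewCells l m).image Prod.fst = Finset.Icc r s := by
    ext i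
    simp only [Finset.mem_image, Prod.exists, exists_and_right, exists_eq_right,
      Finset.mem_Icc]
    exact ⟨fun ⟨_, hj⟩ => h.mem_Icc_of_mem hj,
      fun hi => ⟨_, mem_skewCells.2 ⟨le_rfl, h.rowLen_lt hi.1 hi.2⟩⟩⟩
  have between : beads l ∩ Set.Ioo (beta l s) (beta m r) = beta l '' Set.Ico r s := by
    ext x
    simp only [beads, Set.mem_inter_iff, Set.mem_range, Set.mem_Ioo, Set.mem_image,
      Set.mem_Ico]
    constructor
    · rintro ⟨⟨i, rfl⟩, hsi, hir⟩
      refine ⟨i, ⟨?_, (beta_strictAnti l).lt_iff_gt.1 hsi⟩, rfl⟩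
      by_contra hi
      have := (beta_strictAnti m) (not_le.1 hi)
      rw [h.beta_eq_of_lt (not_le.1 hi)] at this
      omega
    · rintro ⟨i, ⟨hri, his⟩, rfl⟩
      exact ⟨⟨i, rfl⟩, (beta_strictAnti l) his, h.beta_lt_of_le hri⟩
  rw [skewHeight, rows, Nat.card_Icc, beadsBetween, between,
    Set.ncard_image_of_injective _ (beta_strictAnti l).injective, Set.ncard_Ico_nat]
  omega

end IsRowRibbon

lemma IsRibbon.exists_isRowRibbon {l m : YoungDiagram} (h : IsRibbon l m) :
    ∃ r s, IsRowRibbon l m r s := by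
  obtain ⟨hle, hne, hconn, hsq⟩ := h
  set rows := (skewCells l m).image Prod.fst
  have hrows : rows.Nonempty := hne.image _
  have mem_rows : ∀ i, i ∈ rows ↔ l.rowLen i < m.rowLen i := fun i => by
    simp only [rows, Finset.mem_image, Prod.exists, exists_and_right, exists_eq_right,
      mem_skewCells]
    exact ⟨fun ⟨j, hj⟩ => hj.1.trans_lt hj.2, fun hi => ⟨_, le_rfl, hi⟩⟩
  have eq_of_notMem : ∀ i ∉ rows, m.rowLen i = l.rowLen i := fun i hi =>
    le_antisymm (not_lt.1 ((mem_rows i).not.1 hi)) (rowLen_le_rowLen hle i)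
  have hr := (mem_rows _).1 (rows.min'_mem hrows)
  have hs := (mem_rows _).1 (rows.max'_mem hrows)
  refine ⟨rows.min' hrows, rows.max' hrows, rows.min'_le _ (rows.max'_mem hrows),
    fun i hi => eq_of_notMem i fun hi' => (rows.min'_le i hi').not_gt hi,
    fun i hi => eq_of_notMem i fun hi' => (rows.le_max' i hi').not_gt hi, hr,
    fun i hri his => ?_⟩
  obtain ⟨j, hij, hij'⟩ := hconn.exists_vertical_pair (i := i)
    (mem_skewCells.2 ⟨le_rfl, hr⟩) (mem_skewCells.2 ⟨le_rfl, hs⟩) hri his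
  rw [mem_skewCells] at hij hij'
  have := l.rowLen_anti i (i + 1) (by omega)
  have := m.rowLen_anti i (i + 1) (by omega)
  by_contra hne
  -- otherwise the ribbon contains the 2 × 2 square with corner `(i, l.rowLen i)`
  exact hsq ⟨i, l.rowLen i, mem_skewCells.2 ⟨by omega, by omega⟩,
    mem_skewCells.2 ⟨by omega, by omega⟩, mem_skewCells.2 ⟨by omega, by omega⟩,
    mem_skewCells.2 ⟨by omega, by omega⟩⟩

lemma IsBeadMove.exists_isRowRibbon {l : YoungDiagram} {p q : ℤ}
    (h : IsBeadMove (beads l) p q) :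
    ∃ m r s, IsRowRibbon l m r s ∧ beta l s = p ∧ beta m r = q := by
  classical
  obtain ⟨s, rfl⟩ := h.mem
  have hex : ∃ i, beta l i < q := ⟨s, h.lt⟩
  set r := Nat.find hex
  have hr : beta l r < q := Nat.find_spec hex
  have hlt_r : ∀ i < r, q < beta l i := fun i hi =>
    lt_of_le_of_ne (not_lt.1 (Nat.find_min hex hi)) fun he => h.notMem ⟨i, he.symm⟩
  have hrs : r ≤ s := Nat.find_min' hex h.lt
  -- row `r` gets the beta-number `q`, rows `r + 1, …, s` the beta-numbers of the rows above
  let f : ℕ → ℕ := fun i =>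
    if i < r ∨ s < i then l.rowLen i else if i = r then (q + r).toNat else l.rowLen (i - 1) + 1
  have hf : Antitone f := antitone_nat_of_succ_le fun i => by
    have := l.rowLen_anti i (i + 1) (by omega)
    have := l.rowLen_anti (i - 1) i (by omega)
    have h₁ : i < r → q < beta l i := hlt_r i
    have h₂ : i = r → beta l i < q := fun hi => hi ▸ hr
    have h₃ : i = s → beta l i < q := fun hi => hi ▸ h.lt
    simp only [beta] at h₁ h₂ h₃
    simp only [f, Nat.add_sub_cancel]
    split_ifs <;> omega
  have hf_zero : ∀ i, l.colLen 0 + s + 1 ≤ i → f i = 0 := fun i hi => by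
    simp only [f, show s < i by omega, or_true, if_true]
    exact rowLen_eq_zero (by omega)
  have hm := rowLen_ofAntitone (hf := hf) hf_zero
  simp only [beta] at hr
  refine ⟨ofAntitone f hf (l.colLen 0 + s + 1), r, s,
    ⟨hrs, fun i hi => ?_, fun i hi => ?_, ?_, fun i hri his => ?_⟩, rfl, ?_⟩
  · simp [hm, f, hi]
  · simp [hm, f, hi]
  · simp only [hm, f, lt_irrefl, false_or, if_true, not_lt.2 hrs, if_false]
    omega
  · simp only [hm, f, Nat.add_sub_cancel]
    rw [if_neg (by omega), if_neg (by omega)]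
  · simp only [beta, hm, f, lt_irrefl, false_or, if_true, not_lt.2 hrs, if_false]
    omega

lemma IsRibbon.exists_isBeadMove {l m : YoungDiagram} (h : IsRibbon l m) :
    ∃ p q, IsBeadMove (beads l) p q ∧ beads m = moveBead (beads l) p q := by
  obtain ⟨r, s, hrs⟩ := h.exists_isRowRibbon
  exact ⟨_, _, hrs.isBeadMove, hrs.beads_eq⟩

lemma IsBeadMove.exists_beads_eq {l : YoungDiagram} {p q : ℤ} (h : IsBeadMove (beads l) p q) :
    ∃ m, beads m = moveBead (beads l) p q := by
  obtain ⟨m, r, s, hrs, rfl, rfl⟩ := h.exists_isRowRibbon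
  exact ⟨m, hrs.beads_eq⟩

lemma IsBeadMove.isRibbon {l m : YoungDiagram} {p q : ℤ} (h : IsBeadMove (beads l) p q)
    (hm : beads m = moveBead (beads l) p q) :
    IsRibbon l m ∧ ((skewCells l m).card : ℤ) = q - p ∧
      skewSign l m = (-1) ^ beadsBetween (beads l) p q := by
  obtain ⟨m', r, s, hrs, rfl, rfl⟩ := h.exists_isRowRibbon
  obtain rfl : m' = m := beads_injective (hrs.beads_eq.trans hm.symm)
  exact ⟨hrs.isRibbon, hrs.card_skewCells, by rw [skewSign, hrs.skewHeight_eq]⟩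

lemma exists_ribbon_ribbon_iff_hasTwoMovePath {lam xi : YoungDiagram} {k₁ k₂ : ℕ} {ε : ℤ} :
    (∃ nu, IsRibbon lam nu ∧ IsRibbon nu xi ∧ (skewCells lam nu).card = k₁ ∧
      (skewCells nu xi).card = k₂ ∧ skewSign lam nu * skewSign nu xi = ε) ↔
    HasTwoMovePath (beads lam) (beads xi) k₁ k₂ ε := by
  constructor
  · rintro ⟨nu, h₁, h₂, rfl, rfl, rfl⟩
    obtain ⟨p, q, hpq, hnu⟩ := h₁.exists_isBeadMove
    obtain ⟨r, s, hrs, hxi⟩ := h₂.exists_isBeadMove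
    obtain ⟨-, c₁, e₁⟩ := hpq.isRibbon hnu
    obtain ⟨-, c₂, e₂⟩ := hrs.isRibbon hxi
    rw [hnu] at hrs hxi e₂
    exact ⟨p, q, r, s, hpq, hrs, hxi, c₁.symm, c₂.symm, by rw [e₁, e₂, pow_add]⟩
  · rintro ⟨p, q, r, s, hpq, hrs, hxi, hk₁, hk₂, rfl⟩
    obtain ⟨nu, hnu⟩ := hpq.exists_beads_eq
    rw [← hnu] at hrs hxi
    obtain ⟨h₁, c₁, e₁⟩ := hpq.isRibbon hnu
    obtain ⟨h₂, c₂, e₂⟩ := hrs.isRibbon hxi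
    exact ⟨nu, h₁, h₂, by omega, by omega, by rw [e₁, e₂, hnu, pow_add]⟩

/-- Local rule for ribbons: given nonempty ribbons `μ/λ` and `ξ/μ`, exactly one
of the following occurs: either there is `ν` with `ν/λ`, `ξ/ν` ribbons of the
swapped sizes and the same sign product, or there is `μ̂ ≠ μ` with `μ̂/λ`, `ξ/μ̂`
ribbons of the same sizes and the opposite sign product. -/
theorem stmt18 (lam mu xi : YoungDiagram)
    (h1 : IsRibbon lam mu) (h2 : IsRibbon mu xi) :
    Xor'
      (∃ nu : YoungDiagram, lam ≤ nu ∧ nu ≤ xi ∧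
        IsRibbon lam nu ∧ IsRibbon nu xi ∧
        (skewCells lam nu).card = (skewCells mu xi).card ∧
        (skewCells nu xi).card = (skewCells lam mu).card ∧
        skewSign lam nu * skewSign nu xi = skewSign lam mu * skewSign mu xi)
      (∃ muh : YoungDiagram, muh ≠ mu ∧ lam ≤ muh ∧ muh ≤ xi ∧
        IsRibbon lam muh ∧ IsRibbon muh xi ∧
        (skewCells lam muh).card = (skewCells lam mu).card ∧
        (skewCells muh xi).card = (skewCells mu xi).card ∧
        skewSign lam muh * skewSign muh xi
          = -(skewSign lam mu * skewSign mu xi)) := by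
  have key := (exists_ribbon_ribbon_iff_hasTwoMovePath.1 ⟨mu, h1, h2, rfl, rfl, rfl⟩).xor
  rw [← exists_ribbon_ribbon_iff_hasTwoMovePath, ← exists_ribbon_ribbon_iff_hasTwoMovePath] at key
  rcases key with ⟨⟨nu, hν⟩, hno⟩ | ⟨⟨muh, hμ⟩, hno⟩
  · exact Or.inl ⟨⟨nu, hν.1.1, hν.2.1.1, hν⟩, fun ⟨muh, _, _, _, hμ⟩ => hno ⟨muh, hμ⟩⟩
  · have hne : muh ≠ mu := by
      rintro rfl
      exact neg_one_pow_ne_neg _ (by simpa only [skewSign, ← pow_add] using hμ.2.2.2.2)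
    exact Or.inr ⟨⟨muh, hne, hμ.1.1, hμ.2.1.1, hμ⟩, fun ⟨nu, _, _, hν⟩ => hno ⟨nu, hν⟩⟩
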